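/- arXiv:2207.05324 — 6 statements merged into one kernel-verified Lean document; each statement's English description precedes it below -/
import Mathlib

section
/- Let M and M̂ be invertible n×n real matrices satisfying M·M̂⁻¹ = M̂·M⁻¹. Then for all vectors h, t ∈ ℝⁿ, if M·h = M̂·t then M·t = M̂·h. (Under the condition M·M̂⁻¹ = M̂·M⁻¹, CompoundE models symmetric relations: whenever the triple (h, r, t) holds, the triple (t, r, h) also holds.) -/
/-- Under the condition `M·M̂⁻¹ = M̂·M⁻¹` (with `M`, `M̂` invertible),
CompoundE models symmetric relations: whenever `M·h = M̂·t`, also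
`M·t = M̂·h`. -/
theorem compoundE_symmetric
    (n : ℕ) (M Mhat : Matrix (Fin n) (Fin n) ℝ)
    (hM : IsUnit M.det) (hMhat : IsUnit Mhat.det)
    (hcond : M * Mhat⁻¹ = Mhat * M⁻¹) :
    ∀ h t : Fin n → ℝ, M.mulVec h = Mhat.mulVec t → M.mulVec t = Mhat.mulVec h := by
  intro h t hht
  have ht : t = (Mhat⁻¹ * M).mulVec h := by
    rw [← Matrix.mulVec_mulVec, hht, Matrix.mulVec_mulVec,
      Matrix.nonsing_inv_mul _ hMhat, Matrix.one_mulVec]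
  have key : M * (Mhat⁻¹ * M) = Mhat := by
    rw [← mul_assoc, hcond, mul_assoc, Matrix.nonsing_inv_mul _ hM, mul_one]
  rw [ht, Matrix.mulVec_mulVec, key]
end

section
/- Let M and M̂ be invertible n×n real matrices. If for all vectors h, t ∈ ℝⁿ the implication (M·h = M̂·t ⟹ M·t = M̂·h) holds, then M·M̂⁻¹ = M̂·M⁻¹. (If CompoundE realizes a symmetric relation for all entity pairs, then the head and tail compound operators must satisfy M·M̂⁻¹ = M̂·M⁻¹.) -/
/-- If CompoundE (with invertible `M`, `M̂`) realizes a symmetric relation for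
all entity pairs, i.e. `M·h = M̂·t` always implies `M·t = M̂·h`, then the
compound operators satisfy `M·M̂⁻¹ = M̂·M⁻¹`. -/
theorem compoundE_symmetric_converse
    (n : ℕ) (M Mhat : Matrix (Fin n) (Fin n) ℝ)
    (hM : IsUnit M.det) (hMhat : IsUnit Mhat.det)
    (hsym : ∀ h t : Fin n → ℝ, M.mulVec h = Mhat.mulVec t → M.mulVec t = Mhat.mulVec h) :
    M * Mhat⁻¹ = Mhat * M⁻¹ := by
  have key : ∀ v : Fin n → ℝ, (M * Mhat⁻¹).mulVec v = (Mhat * M⁻¹).mulVec v := by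
    intro v
    have h1 : M.mulVec (M⁻¹.mulVec v) = v := by
      rw [Matrix.mulVec_mulVec, Matrix.mul_nonsing_inv M hM, Matrix.one_mulVec]
    have h2 : Mhat.mulVec (Mhat⁻¹.mulVec v) = v := by
      rw [Matrix.mulVec_mulVec, Matrix.mul_nonsing_inv Mhat hMhat, Matrix.one_mulVec]
    have := hsym (M⁻¹.mulVec v) (Mhat⁻¹.mulVec v) (by rw [h1, h2])
    rw [← Matrix.mulVec_mulVec, ← Matrix.mulVec_mulVec, this]
  ext i j
  have := congrFun (key (Pi.single j 1)) i
  simpa [Matrix.mulVec_single] using this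
end

section
/- Let M and M̂ be invertible n×n real matrices with M·M̂⁻¹ ≠ M̂·M⁻¹. Then there exist vectors h, t ∈ ℝⁿ such that M·h = M̂·t but M·t ≠ M̂·h. (When M·M̂⁻¹ ≠ M̂·M⁻¹, CompoundE models an antisymmetric relation: some triple (h, r, t) holds while (t, r, h) does not.) -/
/-- When `M·M̂⁻¹ ≠ M̂·M⁻¹` (with `M`, `M̂` invertible), CompoundE models an
antisymmetric relation: there exist `h, t` with `M·h = M̂·t` but
`M·t ≠ M̂·h`. -/
theorem compoundE_antisymmetric
    (n : ℕ) (M Mhat : Matrix (Fin n) (Fin n) ℝ)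
    (hM : IsUnit M.det) (hMhat : IsUnit Mhat.det)
    (hcond : M * Mhat⁻¹ ≠ Mhat * M⁻¹) :
    ∃ h t : Fin n → ℝ, M.mulVec h = Mhat.mulVec t ∧ M.mulVec t ≠ Mhat.mulVec h := by
  -- find a vector w where the two matrices act differently
  obtain ⟨w, hw⟩ : ∃ w : Fin n → ℝ,
      (M * Mhat⁻¹).mulVec w ≠ (Mhat * M⁻¹).mulVec w := by
    by_contra hc
    push_neg at hc
    apply hcond
    ext i j
    have := congrFun (hc (Pi.single j 1)) i
    simpa [Matrix.mulVec_single] using this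
  refine ⟨M⁻¹.mulVec w, Mhat⁻¹.mulVec w, ?_, ?_⟩
  · rw [Matrix.mulVec_mulVec, Matrix.mulVec_mulVec,
      Matrix.mul_nonsing_inv M hM, Matrix.mul_nonsing_inv Mhat hMhat]
  · rw [Matrix.mulVec_mulVec, Matrix.mulVec_mulVec]
    exact hw
end

section
/- Let M₁, M̂₁, M₂, M̂₂ be n×n real matrices with M₁ and M̂₂ invertible, and suppose M̂₂⁻¹·M₂ = M₁⁻¹·M̂₁. Then for all vectors h, t ∈ ℝⁿ, if M₁·h = M̂₁·t then M₂·t = M̂₂·h. (Under the condition M̂₂⁻¹·M₂ = M₁⁻¹·M̂₁, CompoundE models inverse relations: whenever (h, r₁, t) holds, (t, r₂, h) also holds.) -/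
/-- Under the condition `M̂₂⁻¹·M₂ = M₁⁻¹·M̂₁` (with `M₁`, `M̂₂` invertible),
CompoundE models inverse relations: whenever `M₁·h = M̂₁·t`, also
`M₂·t = M̂₂·h`. -/
theorem compoundE_inversion
    (n : ℕ) (M₁ Mhat₁ M₂ Mhat₂ : Matrix (Fin n) (Fin n) ℝ)
    (hM₁ : IsUnit M₁.det) (hMhat₂ : IsUnit Mhat₂.det)
    (hcond : Mhat₂⁻¹ * M₂ = M₁⁻¹ * Mhat₁) :
    ∀ h t : Fin n → ℝ, M₁.mulVec h = Mhat₁.mulVec t → M₂.mulVec t = Mhat₂.mulVec h := by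
  intro h t hht
  have hM2 : M₂ = Mhat₂ * (M₁⁻¹ * Mhat₁) := by
    rw [← hcond, ← mul_assoc, Matrix.mul_nonsing_inv _ hMhat₂, one_mul]
  rw [hM2, ← Matrix.mulVec_mulVec, ← Matrix.mulVec_mulVec, ← hht,
    Matrix.mulVec_mulVec, Matrix.mulVec_mulVec, mul_assoc, Matrix.nonsing_inv_mul _ hM₁, mul_one]
end

section
/- Let M₁, M̂₁, M₂, M̂₂, M₃, M̂₃ be n×n real matrices with M₁ and M̂₂ invertible, and suppose M₃·M₁⁻¹·M̂₁ = M̂₃·M̂₂⁻¹·M₂. Then for all vectors e₁, e₂, e₃ ∈ ℝⁿ, if M₁·e₁ = M̂₁·e₂ and M₂·e₂ = M̂₂·e₃, then M₃·e₁ = M̂₃·e₃. (Under this condition CompoundE models transitive relation triples: whenever (e₁, r₁, e₂) and (e₂, r₂, e₃) hold, (e₁, r₃, e₃) also holds.) -/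
/-- Under the condition `M₃·M₁⁻¹·M̂₁ = M̂₃·M̂₂⁻¹·M₂` (with `M₁`, `M̂₂`
invertible), CompoundE models transitive relation triples: whenever
`M₁·e₁ = M̂₁·e₂` and `M₂·e₂ = M̂₂·e₃`, also `M₃·e₁ = M̂₃·e₃`. -/
theorem compoundE_transitive
    (n : ℕ) (M₁ Mhat₁ M₂ Mhat₂ M₃ Mhat₃ : Matrix (Fin n) (Fin n) ℝ)
    (hM₁ : IsUnit M₁.det) (hMhat₂ : IsUnit Mhat₂.det)
    (hcond : M₃ * M₁⁻¹ * Mhat₁ = Mhat₃ * Mhat₂⁻¹ * M₂) :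
    ∀ e₁ e₂ e₃ : Fin n → ℝ,
      M₁.mulVec e₁ = Mhat₁.mulVec e₂ → M₂.mulVec e₂ = Mhat₂.mulVec e₃ →
      M₃.mulVec e₁ = Mhat₃.mulVec e₃ := by
  intro e₁ e₂ e₃ h1 h2
  have key1 : M₁⁻¹.mulVec (M₁.mulVec e₁) = e₁ := by
    rw [Matrix.mulVec_mulVec, Matrix.nonsing_inv_mul _ hM₁, Matrix.one_mulVec]
  have key2 : Mhat₂⁻¹.mulVec (Mhat₂.mulVec e₃) = e₃ := by
    rw [Matrix.mulVec_mulVec, Matrix.nonsing_inv_mul _ hMhat₂, Matrix.one_mulVec]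
  calc M₃.mulVec e₁ = (M₃ * M₁⁻¹ * Mhat₁).mulVec e₂ := by
        rw [← Matrix.mulVec_mulVec, ← Matrix.mulVec_mulVec, ← h1, key1]
    _ = (Mhat₃ * Mhat₂⁻¹ * M₂).mulVec e₂ := by rw [hcond]
    _ = Mhat₃.mulVec e₃ := by
        rw [← Matrix.mulVec_mulVec, ← Matrix.mulVec_mulVec, h2, key2]
end

section
/- Let T, R, S, T̂, R̂, Ŝ be d×d real matrices, let h, t ∈ ℝ^d, and let γ ∈ ℝ with 0 ≤ γ ≤ 1. Then ‖T·R·(γS)·h − T̂·R̂·(γŜ)·t‖ ≤ ‖T·R·S·h − T̂·R̂·Ŝ·t‖, where ‖·‖ denotes the Euclidean norm on ℝ^d. (CompoundE can model sub-relations: if relation r₁ has the same translation and rotation components as r₂ but scaling components scaled down by a factor γ ≤ 1, then the CompoundE error score of (h, r₁, t) is no larger than that of (h, r₂, t), so whenever (h, r₂, t) holds, (h, r₁, t) also holds.) -/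
/-- CompoundE can model sub-relations: if relation `r₁` has the same
translation and rotation components as `r₂` but scaling components scaled
down by a factor `0 ≤ γ ≤ 1`, then the CompoundE-Full error score of
`(h, r₁, t)` is no larger than that of `(h, r₂, t)`, where the score is the
Euclidean norm `‖T·R·S·h − T̂·R̂·Ŝ·t‖`. -/
theorem compoundE_subrelation
    (d : ℕ) (T R S That Rhat Shat : Matrix (Fin d) (Fin d) ℝ)
    (h t : Fin d → ℝ) (γ : ℝ) (hγ0 : 0 ≤ γ) (hγ1 : γ ≤ 1) :
    ‖(EuclideanSpace.equiv (Fin d) ℝ).symm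
        ((T * R * (γ • S)).mulVec h - (That * Rhat * (γ • Shat)).mulVec t)‖ ≤
    ‖(EuclideanSpace.equiv (Fin d) ℝ).symm
        ((T * R * S).mulVec h - (That * Rhat * Shat).mulVec t)‖ := by
  have e1 : T * R * (γ • S) = γ • (T * R * S) := by
    rw [Matrix.mul_smul]
  have e2 : That * Rhat * (γ • Shat) = γ • (That * Rhat * Shat) := by
    rw [Matrix.mul_smul]
  rw [e1, e2, Matrix.smul_mulVec, Matrix.smul_mulVec, ← smul_sub,
    map_smul, norm_smul]
  calc ‖γ‖ * _ ≤ 1 * _ := by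
        apply mul_le_mul_of_nonneg_right _ (norm_nonneg _)
        rw [Real.norm_eq_abs, abs_of_nonneg hγ0]; exact hγ1
    _ = _ := one_mul _
end
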